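/- arXiv:2408.11459 — 8 statements merged into one kernel-verified Lean document; each statement's English description precedes it below -/
import Mathlib

section
/- Let a, b, c, d, e ∈ ℂ with ad − bc ≠ 0 and e ≠ 0, let Ω ⊆ ℂ be an open set on which ct + d ≠ 0, and set λ(t) = (at+b)/(ct+d) and μ(t) = e/(ct+d)³. Suppose q₀ : Ω → ℂ is analytic, u : Ω → ℂ is analytic and satisfies u⁗(t) + q₀(t)·u(t) = 0 for all t ∈ Ω, and suppose U and Q₀ are analytic functions on the open set λ(Ω) satisfying U(λ(t)) = μ(t)·u(t) and Q₀(λ(t)) = q₀(t)·(ct+d)⁸/(ad−bc)⁴ for all t ∈ Ω. Then U⁗(λ(t)) + Q₀(λ(t))·U(λ(t)) = 0 for all t ∈ Ω. (That is, the Laguerre–Forsyth form u⁗ + q₀u = 0 of a linear 4th-order ODE is preserved by the residual transformations (t,u) ↦ ((at+b)/(ct+d), e·u/(ct+d)³), with the coefficient q₀ transforming as a relative invariant of weight 4.) -/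
/-!
With `w = c t + d` and `Δ = a d - b c`, differentiation in `λ` is `D = (w² / Δ) d/dt` in the
coordinate `t`. Bol's identity `Dⁿ⁺¹ (w⁻ⁿ F) = wⁿ⁺² F⁽ⁿ⁺¹⁾ / Δⁿ⁺¹` follows by induction on `n`
from `D (w⁻⁽ⁿ⁺¹⁾ F) = w⁻ⁿ (w F' - (n+1) c F) / Δ` and `(w F' - (n+1) c F)⁽ⁿ⁺¹⁾ = w F⁽ⁿ⁺²⁾`.
For `n = 3` it gives `U⁗(λ) = e w⁵ u⁗ / Δ⁴`, while `Q₀(λ) U(λ) = e w⁵ q₀ u / Δ⁴`.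
-/

open Set Filter

/-- `d/dλ` for `λ(t) = (a t + b) / (c t + d)`, written in the coordinate `t`. -/
noncomputable def moebiusDeriv (a b c d : ℂ) (g : ℂ → ℂ) : ℂ → ℂ :=
  fun t => (c * t + d) ^ 2 / (a * d - b * c) * deriv g t

section Moebius

variable {a b c d : ℂ} {Ω : Set ℂ}

theorem hasDerivAt_moebius {s : ℂ} (hs : c * s + d ≠ 0) :
    HasDerivAt (fun t => (a * t + b) / (c * t + d)) ((a * d - b * c) / (c * s + d) ^ 2) s := by
  have hnum : HasDerivAt (fun t => a * t + b) a s := by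
    simpa using ((hasDerivAt_id s).const_mul a).add_const b
  have hden : HasDerivAt (fun t => c * t + d) c s := by
    simpa using ((hasDerivAt_id s).const_mul c).add_const d
  have hdiv := hnum.div hden hs
  rwa [show a * (c * s + d) - (a * s + b) * c = a * d - b * c by ring] at hdiv

theorem Set.EqOn.iterate_moebiusDeriv (hΩ : IsOpen Ω) {g h : ℂ → ℂ} (hgh : EqOn g h Ω) (k : ℕ) :
    EqOn ((moebiusDeriv a b c d)^[k] g) ((moebiusDeriv a b c d)^[k] h) Ω := by
  induction k generalizing g h with
  | zero => exact hgh
  | succ k ih =>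
    refine ih fun s hs => ?_
    simp only [moebiusDeriv, (hgh.eventuallyEq_of_mem (hΩ.mem_nhds hs)).deriv_eq]

theorem deriv_eq_moebiusDeriv_of_comp_eq (had : a * d - b * c ≠ 0) (hΩ : IsOpen Ω)
    (hcd : ∀ t ∈ Ω, c * t + d ≠ 0) {V g : ℂ → ℂ}
    (hV : ∀ s ∈ Ω, DifferentiableAt ℂ V ((a * s + b) / (c * s + d)))
    (hVg : ∀ s ∈ Ω, V ((a * s + b) / (c * s + d)) = g s) {s : ℂ} (hs : s ∈ Ω) :
    deriv V ((a * s + b) / (c * s + d)) = moebiusDeriv a b c d g s := by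
  have hchain := (hV s hs).hasDerivAt.comp s (hasDerivAt_moebius (hcd s hs))
  have hg : deriv g s = deriv V ((a * s + b) / (c * s + d)) * ((a * d - b * c) / (c * s + d) ^ 2) :=
    (hchain.congr_of_eventuallyEq (eventually_of_mem (hΩ.mem_nhds hs) fun t ht => (hVg t ht).symm)).deriv
  rw [moebiusDeriv, hg, mul_left_comm, div_mul_div_comm, mul_comm ((c * s + d) ^ 2),
    div_self (mul_ne_zero had (pow_ne_zero 2 (hcd s hs))), mul_one]

theorem iteratedDeriv_eq_iterate_moebiusDeriv_of_comp_eq (had : a * d - b * c ≠ 0)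
    (hΩ : IsOpen Ω) (hcd : ∀ t ∈ Ω, c * t + d ≠ 0) {V g : ℂ → ℂ}
    (hV : AnalyticOnNhd ℂ V ((fun t => (a * t + b) / (c * t + d)) '' Ω))
    (hVg : ∀ s ∈ Ω, V ((a * s + b) / (c * s + d)) = g s) (k : ℕ) {s : ℂ} (hs : s ∈ Ω) :
    iteratedDeriv k V ((a * s + b) / (c * s + d)) = (moebiusDeriv a b c d)^[k] g s := by
  induction k generalizing V g with
  | zero => exact hVg s hs
  | succ k ih =>
    rw [iteratedDeriv_succ', Function.iterate_succ_apply]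
    exact ih hV.deriv fun t ht => deriv_eq_moebiusDeriv_of_comp_eq had hΩ hcd
      (fun t ht => (hV _ ⟨t, ht, rfl⟩).differentiableAt) hVg ht

end Moebius

section Bol

variable {Ω : Set ℂ} {c d : ℂ}

theorem iteratedDeriv_linear_mul_deriv_sub (hΩ : IsOpen Ω) {F : ℂ → ℂ} (hF : AnalyticOnNhd ℂ F Ω)
    (m : ℂ) (k : ℕ) {s : ℂ} (hs : s ∈ Ω) :
    iteratedDeriv k (fun t => (c * t + d) * deriv F t - m * c * F t) s =
      (c * s + d) * iteratedDeriv (k + 1) F s + (k - m) * c * iteratedDeriv k F s := by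
  induction k generalizing s with
  | zero => simp [iteratedDeriv_one, sub_eq_add_neg]
  | succ k ih =>
    have hlin : HasDerivAt (fun t => c * t + d) c s := by
      simpa using ((hasDerivAt_id s).const_mul c).add_const d
    have hderiv (j : ℕ) : HasDerivAt (iteratedDeriv j F) (iteratedDeriv (j + 1) F s) s := by
      rw [iteratedDeriv_succ, iteratedDeriv_eq_iterate]
      exact ((hF.iterated_deriv j) s hs).differentiableAt.hasDerivAt
    have hsum := (hlin.mul (hderiv (k + 1))).add ((hderiv k).const_mul ((k - m) * c))
    rw [iteratedDeriv_succ, (eventuallyEq_of_mem (hΩ.mem_nhds hs) fun t ht => ih ht).deriv_eq]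
    refine hsum.deriv.trans ?_
    push_cast
    ring

theorem moebiusDeriv_mul_div_pow (a b e : ℂ) (n : ℕ) {F : ℂ → ℂ} {s : ℂ} (hs : c * s + d ≠ 0)
    (hF : DifferentiableAt ℂ F s) :
    moebiusDeriv a b c d (fun t => e * F t / (c * t + d) ^ (n + 1)) s =
      e / (a * d - b * c) * ((c * s + d) * deriv F s - (n + 1) * c * F s) / (c * s + d) ^ n := by
  have hlin : HasDerivAt (fun t => c * t + d) c s := by
    simpa using ((hasDerivAt_id s).const_mul c).add_const d
  have hquot : HasDerivAt (fun t => e * F t / (c * t + d) ^ (n + 1)) _ s :=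
    (hF.hasDerivAt.const_mul e).div (hlin.pow (n + 1)) (pow_ne_zero _ hs)
  rw [moebiusDeriv, hquot.deriv, add_tsub_cancel_right]
  push_cast
  field_simp
  ring

/-- Bol's identity. -/
theorem iterate_moebiusDeriv_mul_div_pow {a b : ℂ} (hΩ : IsOpen Ω) (hcd : ∀ t ∈ Ω, c * t + d ≠ 0)
    (n : ℕ) (e : ℂ) {F : ℂ → ℂ} (hF : AnalyticOnNhd ℂ F Ω) {s : ℂ} (hs : s ∈ Ω) :
    (moebiusDeriv a b c d)^[n + 1] (fun t => e * F t / (c * t + d) ^ n) s =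
      e * (c * s + d) ^ (n + 2) * iteratedDeriv (n + 1) F s / (a * d - b * c) ^ (n + 1) := by
  induction n generalizing e F with
  | zero =>
    simp only [zero_add, pow_zero, div_one, Function.iterate_one, moebiusDeriv,
      deriv_const_mul_field', iteratedDeriv_one, pow_one]
    ring
  | succ n ih =>
    set G : ℂ → ℂ := fun t => (c * t + d) * deriv F t - (n + 1) * c * F t
    have hlin : AnalyticOnNhd ℂ (fun t => c * t + d) Ω :=
      (analyticOnNhd_const.mul analyticOnNhd_id).add analyticOnNhd_const
    have hG : AnalyticOnNhd ℂ G Ω := (hlin.mul hF.deriv).sub (analyticOnNhd_const.mul hF)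
    have hstep : EqOn (moebiusDeriv a b c d (fun t => e * F t / (c * t + d) ^ (n + 1)))
        (fun t => e / (a * d - b * c) * G t / (c * t + d) ^ n) Ω := fun t ht =>
      moebiusDeriv_mul_div_pow a b e n (hcd t ht) (hF t ht).differentiableAt
    rw [Function.iterate_succ_apply, hstep.iterate_moebiusDeriv hΩ (n + 1) hs, ih _ hG,
      iteratedDeriv_linear_mul_deriv_sub hΩ hF _ _ hs]
    push_cast
    generalize a * d - b * c = Δ
    ring

end Bol

theorem laguerre_forsyth_invariance_general
    (a b c d e : ℂ) (had : a * d - b * c ≠ 0)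
    (Ω : Set ℂ) (hΩ : IsOpen Ω) (hcd : ∀ t ∈ Ω, c * t + d ≠ 0)
    (lam mu : ℂ → ℂ)
    (hlam : ∀ t, lam t = (a * t + b) / (c * t + d))
    (hmu : ∀ t, mu t = e / (c * t + d) ^ 3)
    (q₀ u : ℂ → ℂ)
    (hu : AnalyticOnNhd ℂ u Ω)
    (hode : ∀ t ∈ Ω, iteratedDeriv 4 u t + q₀ t * u t = 0)
    (U Q₀ : ℂ → ℂ)
    (hUan : AnalyticOnNhd ℂ U (lam '' Ω))
    (hU : ∀ t ∈ Ω, U (lam t) = mu t * u t)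
    (hQ₀ : ∀ t ∈ Ω, Q₀ (lam t) = q₀ t * (c * t + d) ^ 8 / (a * d - b * c) ^ 4) :
    ∀ t ∈ Ω, iteratedDeriv 4 U (lam t) + Q₀ (lam t) * U (lam t) = 0 := by
  obtain rfl : lam = fun t => (a * t + b) / (c * t + d) := funext hlam
  have hUu : ∀ s ∈ Ω, U ((a * s + b) / (c * s + d)) = e * u s / (c * s + d) ^ 3 := fun s hs => by
    rw [hU s hs, hmu, mul_div_right_comm]
  intro t ht
  have hw := hcd t ht
  rw [iteratedDeriv_eq_iterate_moebiusDeriv_of_comp_eq had hΩ hcd hUan hUu 4 ht,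
    iterate_moebiusDeriv_mul_div_pow hΩ hcd 3 e hu ht, hQ₀ t ht, hUu t ht,
    eq_neg_of_add_eq_zero_left (hode t ht)]
  field_simp
  ring

/-- The Laguerre–Forsyth form `u⁗ + q₀·u = 0` of a linear 4th-order ODE is preserved by
the residual transformations `(t, u) ↦ ((at+b)/(ct+d), e·u/(ct+d)³)`, with the
coefficient `q₀` transforming as a relative invariant of weight 4. -/
theorem laguerre_forsyth_invariance
    (a b c d e : ℂ) (had : a * d - b * c ≠ 0) (he : e ≠ 0)
    (Ω : Set ℂ) (hΩ : IsOpen Ω) (hcd : ∀ t ∈ Ω, c * t + d ≠ 0)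
    (lam mu : ℂ → ℂ)
    (hlam : ∀ t, lam t = (a * t + b) / (c * t + d))
    (hmu : ∀ t, mu t = e / (c * t + d) ^ 3)
    (q₀ u : ℂ → ℂ)
    (hq₀ : AnalyticOnNhd ℂ q₀ Ω) (hu : AnalyticOnNhd ℂ u Ω)
    (hode : ∀ t ∈ Ω, iteratedDeriv 4 u t + q₀ t * u t = 0)
    (U Q₀ : ℂ → ℂ)
    (hUan : AnalyticOnNhd ℂ U (lam '' Ω)) (hQ₀an : AnalyticOnNhd ℂ Q₀ (lam '' Ω))
    (hU : ∀ t ∈ Ω, U (lam t) = mu t * u t)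
    (hQ₀ : ∀ t ∈ Ω, Q₀ (lam t) = q₀ t * (c * t + d) ^ 8 / (a * d - b * c) ^ 4) :
    ∀ t ∈ Ω, iteratedDeriv 4 U (lam t) + Q₀ (lam t) * U (lam t) = 0 :=
  laguerre_forsyth_invariance_general a b c d e had Ω hΩ hcd lam mu hlam hmu q₀ u hu hode U Q₀ hUan
    hU hQ₀
end

section
/- Let a, b, c, d ∈ ℂ with ad − bc ≠ 0, let Ω ⊆ ℂ be an open set on which ct + d ≠ 0, and let λ(t) = (at+b)/(ct+d), so λ'(t) = (ad−bc)/(ct+d)². Let q₀ : Ω → ℂ be analytic, and let Q₀ be an analytic function on λ(Ω) satisfying Q₀(λ(t)) = q₀(t)·(ct+d)⁸/(ad−bc)⁴ for all t ∈ Ω. Then for all t ∈ Ω: 8·Q₀(λ(t))·Q₀''(λ(t)) − 9·(Q₀'(λ(t)))² = ((ct+d)²⁰/(ad−bc)¹⁰)·(8·q₀(t)·q₀''(t) − 9·(q₀'(t))²). (That is, 𝓡 := 8q₀q₀'' − 9(q₀')² is a relative invariant of weight 10: it transforms as 𝓡̃ = 𝓡/(λ')¹⁰.) -/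
/-!
If `Q (λ t) = q t · (ct+d)^{2k} / (ad-bc)^k`, two applications of the chain rule, with
`λ' = (ad-bc)/(ct+d)²` and `(ct+d)' = c`, express `Q'` and `Q''` at `λ t` through `q, q', q''`.
The terms of `Q Q''` and `Q'²` involving `c` are proportional to `q q'` and `q²`, with
coefficients in ratio `2k + 1 : 2k`, so they cancel in `2k Q Q'' - (2k+1) Q'²`; for `k = 4` this is
`8 Q Q'' - 9 Q'²`.
-/

open Filter Topology

section Field

variable {𝕜 : Type*} [NontriviallyNormedField 𝕜]

theorem deriv_comp_mul_eq_of_eventuallyEq {f φ g : 𝕜 → 𝕜} {t φ' g' : 𝕜}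
    (hf : DifferentiableAt 𝕜 f (φ t)) (hφ : HasDerivAt φ φ' t) (hg : HasDerivAt g g' t)
    (hfg : f ∘ φ =ᶠ[𝓝 t] g) : deriv f (φ t) * φ' = g' :=
  (hf.hasDerivAt.comp t hφ).unique (hg.congr_of_eventuallyEq hfg)

theorem hasDerivAt_mobius {a b c d t : 𝕜} (ht : c * t + d ≠ 0) :
    HasDerivAt (fun s => (a * s + b) / (c * s + d)) ((a * d - b * c) / (c * t + d) ^ 2) t := by
  have hlin (p r : 𝕜) : HasDerivAt (fun s => p * s + r) p t := by
    simpa using ((hasDerivAt_id t).const_mul p).add_const r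
  exact ((hlin a b).div (hlin c d) ht).congr_deriv (by ring)

theorem hasDerivAt_affine_pow (c d t : 𝕜) (n : ℕ) :
    HasDerivAt (fun s => (c * s + d) ^ n) (n * (c * t + d) ^ (n - 1) * c) t := by
  simpa using (((hasDerivAt_id t).const_mul c).add_const d).fun_pow n

theorem natCast_mul_pow_sub_one_mul_sq (n : ℕ) (x : 𝕜) :
    (n : 𝕜) * x ^ (n - 1) * x ^ 2 = n * x ^ (n + 1) := by
  rcases n with _ | n
  · simp
  · simp only [Nat.add_sub_cancel]
    ring

variable {a b c d t : 𝕜} {lam Q g : 𝕜 → 𝕜} {g' : 𝕜}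

theorem deriv_mul_det_of_comp_mobius (hlam : ∀ s, lam s = (a * s + b) / (c * s + d))
    (ht : c * t + d ≠ 0) (hQ : DifferentiableAt 𝕜 Q (lam t)) (hg : HasDerivAt g g' t)
    (hQg : ∀ᶠ s in 𝓝 t, Q (lam s) = g s) :
    deriv Q (lam t) * (a * d - b * c) = g' * (c * t + d) ^ 2 := by
  have hlam' : HasDerivAt lam ((a * d - b * c) / (c * t + d) ^ 2) t := by
    simpa only [← funext hlam] using hasDerivAt_mobius (a := a) (b := b) ht
  rw [← deriv_comp_mul_eq_of_eventuallyEq hQ hlam' hg hQg]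
  field_simp

theorem deriv_comp_mobius_of_weight {q : 𝕜 → 𝕜} {k : ℕ} (had : a * d - b * c ≠ 0)
    (hlam : ∀ s, lam s = (a * s + b) / (c * s + d))
    (ht : c * t + d ≠ 0) (hQ : DifferentiableAt 𝕜 Q (lam t)) (hq : DifferentiableAt 𝕜 q t)
    (hQq : ∀ᶠ s in 𝓝 t, Q (lam s) = q s * (c * s + d) ^ (2 * k) / (a * d - b * c) ^ k) :
    deriv Q (lam t) = (deriv q t * (c * t + d) ^ (2 * k + 2)
      + 2 * k * c * q t * (c * t + d) ^ (2 * k + 1)) / (a * d - b * c) ^ (k + 1) := by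
  have h := deriv_mul_det_of_comp_mobius hlam ht hQ
    ((hq.hasDerivAt.mul (hasDerivAt_affine_pow c d t (2 * k))).div_const _) hQq
  rw [eq_div_iff (pow_ne_zero _ had), pow_succ', ← mul_assoc, h, div_mul_eq_mul_div,
    div_mul_cancel₀ _ (pow_ne_zero _ had)]
  have := natCast_mul_pow_sub_one_mul_sq (2 * k) (c * t + d)
  push_cast at this ⊢
  linear_combination q t * c * this

end Field

section Complex

variable {a b c d : ℂ} {Ω : Set ℂ} {lam q Q : ℂ → ℂ} {k : ℕ}

theorem iteratedDeriv_two_comp_mobius_of_weight (had : a * d - b * c ≠ 0) (hΩ : IsOpen Ω)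
    (hcd : ∀ t ∈ Ω, c * t + d ≠ 0) (hlam : ∀ s, lam s = (a * s + b) / (c * s + d))
    (hq : AnalyticOnNhd ℂ q Ω) (hQ : AnalyticOnNhd ℂ Q (lam '' Ω))
    (hQq : ∀ t ∈ Ω, Q (lam t) = q t * (c * t + d) ^ (2 * k) / (a * d - b * c) ^ k)
    {t : ℂ} (ht : t ∈ Ω) :
    iteratedDeriv 2 Q (lam t) = (iteratedDeriv 2 q t * (c * t + d) ^ (2 * k + 4)
      + (4 * k + 2) * c * deriv q t * (c * t + d) ^ (2 * k + 3)
      + 2 * k * (2 * k + 1) * c ^ 2 * q t * (c * t + d) ^ (2 * k + 2)) /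
        (a * d - b * c) ^ (k + 2) := by
  have hderiv : ∀ s ∈ Ω, deriv Q (lam s) = (deriv q s * (c * s + d) ^ (2 * k + 2)
      + 2 * k * c * q s * (c * s + d) ^ (2 * k + 1)) / (a * d - b * c) ^ (k + 1) :=
    fun s hs => deriv_comp_mobius_of_weight had hlam (hcd s hs)
      (hQ _ ⟨s, hs, rfl⟩).differentiableAt (hq s hs).differentiableAt
      (eventually_of_mem (hΩ.mem_nhds hs) hQq)
  have hg := ((((hq.deriv t ht).differentiableAt.hasDerivAt).mul
    (hasDerivAt_affine_pow c d t (2 * k + 2))).add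
    (((hq t ht).differentiableAt.hasDerivAt.const_mul (2 * k * c)).mul
      (hasDerivAt_affine_pow c d t (2 * k + 1)))).div_const ((a * d - b * c) ^ (k + 1))
  have h := deriv_mul_det_of_comp_mobius hlam (hcd t ht)
    (hQ.deriv _ ⟨t, ht, rfl⟩).differentiableAt hg (eventually_of_mem (hΩ.mem_nhds ht) hderiv)
  simp only [iteratedDeriv_succ, iteratedDeriv_zero]
  rw [eq_div_iff (pow_ne_zero _ had), pow_succ',
    ← mul_assoc, h, div_mul_eq_mul_div, div_mul_cancel₀ _ (pow_ne_zero _ had)]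
  simp only [Nat.add_sub_cancel]
  push_cast
  ring

theorem hessian_comp_mobius_of_weight (had : a * d - b * c ≠ 0) (hΩ : IsOpen Ω)
    (hcd : ∀ t ∈ Ω, c * t + d ≠ 0) (hlam : ∀ s, lam s = (a * s + b) / (c * s + d))
    (hq : AnalyticOnNhd ℂ q Ω) (hQ : AnalyticOnNhd ℂ Q (lam '' Ω))
    (hQq : ∀ t ∈ Ω, Q (lam t) = q t * (c * t + d) ^ (2 * k) / (a * d - b * c) ^ k)
    {t : ℂ} (ht : t ∈ Ω) :
    2 * k * Q (lam t) * iteratedDeriv 2 Q (lam t) - (2 * k + 1) * deriv Q (lam t) ^ 2 =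
      (c * t + d) ^ (4 * k + 4) / (a * d - b * c) ^ (2 * k + 2) *
        (2 * k * q t * iteratedDeriv 2 q t - (2 * k + 1) * deriv q t ^ 2) := by
  rw [hQq t ht, iteratedDeriv_two_comp_mobius_of_weight had hΩ hcd hlam hq hQ hQq ht,
    deriv_comp_mobius_of_weight had hlam (hcd t ht) (hQ _ ⟨t, ht, rfl⟩).differentiableAt
      (hq t ht).differentiableAt (eventually_of_mem (hΩ.mem_nhds ht) hQq)]
  field_simp
  ring

end Complex

/-- `𝓡 := 8q₀q₀'' − 9(q₀')²` is a relative invariant of weight 10: under the Möbius change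
of variable `T = λ(t) = (at+b)/(ct+d)` it transforms as `𝓡̃ = 𝓡/(λ')¹⁰`, i.e.
`8·Q₀·Q₀'' − 9·(Q₀')²` at `λ(t)` equals `((ct+d)²⁰/(ad−bc)¹⁰)·(8·q₀·q₀'' − 9·(q₀')²)` at `t`. -/
theorem R_relative_invariant_weight_ten
    (a b c d : ℂ) (had : a * d - b * c ≠ 0)
    (Ω : Set ℂ) (hΩ : IsOpen Ω) (hcd : ∀ t ∈ Ω, c * t + d ≠ 0)
    (lam : ℂ → ℂ) (hlam : ∀ t, lam t = (a * t + b) / (c * t + d))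
    (q₀ : ℂ → ℂ) (hq₀ : AnalyticOnNhd ℂ q₀ Ω)
    (Q₀ : ℂ → ℂ) (hQ₀an : AnalyticOnNhd ℂ Q₀ (lam '' Ω))
    (hQ₀ : ∀ t ∈ Ω, Q₀ (lam t) = q₀ t * (c * t + d) ^ 8 / (a * d - b * c) ^ 4) :
    ∀ t ∈ Ω,
      8 * Q₀ (lam t) * iteratedDeriv 2 Q₀ (lam t) - 9 * (deriv Q₀ (lam t)) ^ 2 =
        ((c * t + d) ^ 20 / (a * d - b * c) ^ 10) *
          (8 * q₀ t * iteratedDeriv 2 q₀ t - 9 * (deriv q₀ t) ^ 2) := by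
  intro t ht
  have h := hessian_comp_mobius_of_weight (k := 4) had hΩ hcd hlam hq₀ hQ₀an hQ₀ ht
  norm_num at h
  exact h
end

section
/- Let a, b, c, d ∈ ℂ with ad − bc ≠ 0, let Ω ⊆ ℂ be an open set on which ct + d ≠ 0, and let λ(t) = (at+b)/(ct+d), so λ'(t) = (ad−bc)/(ct+d)². Let q₀ : Ω → ℂ be analytic, and let Q₀ be an analytic function on λ(Ω) satisfying Q₀(λ(t)) = q₀(t)·(ct+d)⁸/(ad−bc)⁴ for all t ∈ Ω. Then for every t ∈ Ω with q₀(t) ≠ 0, one has Q₀(λ(t)) ≠ 0 and (8·Q₀(λ(t))·Q₀''(λ(t)) − 9·(Q₀'(λ(t)))²)² / (4096·Q₀(λ(t))⁵) = (8·q₀(t)·q₀''(t) − 9·(q₀'(t))²)² / (4096·q₀(t)⁵). (That is, 𝓘 := 𝓡²/(4096 q₀⁵) with 𝓡 = 8q₀q₀'' − 9(q₀')² is an absolute invariant.) -/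
open Filter Topology

/-!
Write `u = c t + d` and `Δ = a d - b c`, so that `λ' = Δ / u²` and `u' = c`. Differentiating
`Q₀ ∘ λ = q₀ u⁸ / Δ⁴` once and twice and dividing by `λ'` expresses `Q₀'(λ t)` and `Q₀''(λ t)`
through `q₀, q₀', q₀''` at `t`; substituting gives `𝓡(Q₀)(λ t) = 𝓡(q₀)(t) · u²⁰ / Δ¹⁰`, and
`Q₀(λ t)⁵ = q₀(t)⁵ · u⁴⁰ / Δ²⁰`, so the weights cancel in `𝓡² / Q₀⁵`.
-/

noncomputable def laguerreForsythInvariant (q q' q'' : ℂ) : ℂ :=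
  (8 * q * q'' - 9 * q' ^ 2) ^ 2 / (4096 * q ^ 5)

theorem laguerreForsythInvariant_transform {q q' q'' u Δ : ℂ} (c : ℂ)
    (hq : q ≠ 0) (hu : u ≠ 0) (hΔ : Δ ≠ 0) :
    laguerreForsythInvariant (q * u ^ 8 / Δ ^ 4) ((q' * u ^ 10 + 8 * c * q * u ^ 9) / Δ ^ 5)
        ((q'' * u ^ 12 + 18 * c * q' * u ^ 11 + 72 * c ^ 2 * q * u ^ 10) / Δ ^ 6) =
      laguerreForsythInvariant q q' q'' := by
  unfold laguerreForsythInvariant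
  field_simp
  ring

section Derivatives

variable {𝕜 : Type*} [NontriviallyNormedField 𝕜]

theorem deriv_eq_div_of_comp_eventuallyEq {Q lam g : 𝕜 → 𝕜} {t lam' g' : 𝕜}
    (hQ : DifferentiableAt 𝕜 Q (lam t)) (hlam : HasDerivAt lam lam' t) (hlam' : lam' ≠ 0)
    (hg : HasDerivAt g g' t) (h : (fun s => Q (lam s)) =ᶠ[𝓝 t] g) :
    deriv Q (lam t) = g' / lam' := by
  rw [eq_div_iff hlam']
  exact (hQ.hasDerivAt.comp t hlam).unique (hg.congr_of_eventuallyEq h)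

variable {Q lam q : 𝕜 → 𝕜} {c d Δ t : 𝕜}

theorem deriv_of_comp_eventuallyEq_mul_pow_eight (hu : c * t + d ≠ 0) (hΔ : Δ ≠ 0)
    (hQ : DifferentiableAt 𝕜 Q (lam t)) (hlam : HasDerivAt lam (Δ / (c * t + d) ^ 2) t)
    (hq : DifferentiableAt 𝕜 q t)
    (h : (fun s => Q (lam s)) =ᶠ[𝓝 t] fun s => q s * (c * s + d) ^ 8 / Δ ^ 4) :
    deriv Q (lam t) =
      (deriv q t * (c * t + d) ^ 10 + 8 * c * q t * (c * t + d) ^ 9) / Δ ^ 5 := by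
  have hpow : HasDerivAt (fun s => (c * s + d) ^ 8) (8 * (c * t + d) ^ 7 * c) t := by
    simpa using (((hasDerivAt_id t).const_mul c).add_const d).fun_pow 8
  rw [deriv_eq_div_of_comp_eventuallyEq hQ hlam (by positivity)
    ((hq.hasDerivAt.mul hpow).div_const _) h]
  field_simp

theorem deriv_deriv_of_deriv_comp_eventuallyEq (hu : c * t + d ≠ 0) (hΔ : Δ ≠ 0)
    (hQ : DifferentiableAt 𝕜 (deriv Q) (lam t)) (hlam : HasDerivAt lam (Δ / (c * t + d) ^ 2) t)
    (hq : DifferentiableAt 𝕜 q t) (hq' : DifferentiableAt 𝕜 (deriv q) t)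
    (h : (fun s => deriv Q (lam s)) =ᶠ[𝓝 t]
      fun s => (deriv q s * (c * s + d) ^ 10 + 8 * c * q s * (c * s + d) ^ 9) / Δ ^ 5) :
    deriv (deriv Q) (lam t) =
      (deriv (deriv q) t * (c * t + d) ^ 12 + 18 * c * deriv q t * (c * t + d) ^ 11
        + 72 * c ^ 2 * q t * (c * t + d) ^ 10) / Δ ^ 6 := by
  have hlin : HasDerivAt (fun s => c * s + d) c t := by
    simpa using ((hasDerivAt_id t).const_mul c).add_const d
  have hpow10 : HasDerivAt (fun s => (c * s + d) ^ 10) (10 * (c * t + d) ^ 9 * c) t := by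
    simpa using hlin.fun_pow 10
  have hpow9 : HasDerivAt (fun s => (c * s + d) ^ 9) (9 * (c * t + d) ^ 8 * c) t := by
    simpa using hlin.fun_pow 9
  have hg := ((hq'.hasDerivAt.mul hpow10).add
    (((hq.hasDerivAt.const_mul (8 * c)).mul hpow9))).div_const (Δ ^ 5)
  rw [deriv_eq_div_of_comp_eventuallyEq hQ hlam (by positivity) hg (by simpa [mul_assoc] using h)]
  field_simp
  ring

end Derivatives

/-- `𝓘 := 𝓡²/(4096·q₀⁵)` with `𝓡 = 8q₀q₀'' − 9(q₀')²` is an absolute invariant of the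
Laguerre–Forsyth canonical form under the residual Möbius transformations. -/
theorem I_absolute_invariant
    (a b c d : ℂ) (had : a * d - b * c ≠ 0)
    (Ω : Set ℂ) (hΩ : IsOpen Ω) (hcd : ∀ t ∈ Ω, c * t + d ≠ 0)
    (lam : ℂ → ℂ) (hlam : ∀ t, lam t = (a * t + b) / (c * t + d))
    (q₀ : ℂ → ℂ) (hq₀ : AnalyticOnNhd ℂ q₀ Ω)
    (Q₀ : ℂ → ℂ) (hQ₀an : AnalyticOnNhd ℂ Q₀ (lam '' Ω))
    (hQ₀ : ∀ t ∈ Ω, Q₀ (lam t) = q₀ t * (c * t + d) ^ 8 / (a * d - b * c) ^ 4) :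
    ∀ t ∈ Ω, q₀ t ≠ 0 →
      Q₀ (lam t) ≠ 0 ∧
      (8 * Q₀ (lam t) * iteratedDeriv 2 Q₀ (lam t) - 9 * (deriv Q₀ (lam t)) ^ 2) ^ 2
          / (4096 * Q₀ (lam t) ^ 5) =
        (8 * q₀ t * iteratedDeriv 2 q₀ t - 9 * (deriv q₀ t) ^ 2) ^ 2
          / (4096 * q₀ t ^ 5) := by
  have hlam' : ∀ s ∈ Ω, HasDerivAt lam ((a * d - b * c) / (c * s + d) ^ 2) s := fun s hs =>
    funext hlam ▸ hasDerivAt_mobius (hcd s hs)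
  have hderiv1 : ∀ s ∈ Ω, deriv Q₀ (lam s) = (deriv q₀ s * (c * s + d) ^ 10
      + 8 * c * q₀ s * (c * s + d) ^ 9) / (a * d - b * c) ^ 5 := fun s hs =>
    deriv_of_comp_eventuallyEq_mul_pow_eight (hcd s hs) had
      (hQ₀an _ ⟨s, hs, rfl⟩).differentiableAt (hlam' s hs)
      (hq₀ s hs).differentiableAt (eventually_of_mem (hΩ.mem_nhds hs) hQ₀)
  intro t ht hqt
  have hQt : Q₀ (lam t) = q₀ t * (c * t + d) ^ 8 / (a * d - b * c) ^ 4 := hQ₀ t ht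
  have hderiv2 := deriv_deriv_of_deriv_comp_eventuallyEq (hcd t ht) had
    ((hQ₀an.deriv _ ⟨t, ht, rfl⟩).differentiableAt) (hlam' t ht) (hq₀ t ht).differentiableAt
    (hq₀.deriv t ht).differentiableAt (eventually_of_mem (hΩ.mem_nhds ht) hderiv1)
  have hQne : Q₀ (lam t) ≠ 0 := by
    have := hcd t ht
    rw [hQt]
    positivity
  refine ⟨hQne, ?_⟩
  simp only [iteratedDeriv_succ, iteratedDeriv_zero]
  change laguerreForsythInvariant _ _ _ = laguerreForsythInvariant _ _ _
  rw [hderiv2, hderiv1 t ht, hQt]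
  exact laguerreForsythInvariant_transform c hqt (hcd t ht) had
end

section
/- Let A be the 4×4 complex block-diagonal matrix with diagonal 2×2 blocks [[1,1],[0,1]] and [[−1,1],[0,−1]]. Let z = (z₁, z₂, z₃, z₄)ᵀ ∈ ℂ⁴ with z₂·z₄ ≠ 0, and let P be the block-diagonal matrix with blocks [[z₂, z₁−z₂],[0, z₂]] and [[z₄, z₃−z₄],[0, z₄]]. Then P is invertible, P commutes with A (so PAP⁻¹ = A), and P·(1,1,1,1)ᵀ = z. -/
open Matrix

/-- Normalization of admissible base points for the symmetry generator `A` of the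
homogeneous Legendrian curve of class `𝐋₁`: any base point with `z₂z₄ ≠ 0` is carried
to `(1,1,1,1)ᵀ` by an invertible matrix `P` commuting with `A`. -/
theorem L1_base_point_normalization
    (A : Matrix (Fin 4) (Fin 4) ℂ)
    (hA : A = !![1, 1, 0, 0; 0, 1, 0, 0; 0, 0, -1, 1; 0, 0, 0, -1])
    (z₁ z₂ z₃ z₄ : ℂ) (hz : z₂ * z₄ ≠ 0)
    (P : Matrix (Fin 4) (Fin 4) ℂ)
    (hP : P = !![z₂, z₁ - z₂, 0, 0; 0, z₂, 0, 0; 0, 0, z₄, z₃ - z₄; 0, 0, 0, z₄]) :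
    IsUnit P ∧ P * A = A * P ∧ P.mulVec ![1, 1, 1, 1] = ![z₁, z₂, z₃, z₄] := by
  subst hA hP
  refine ⟨?_, ?_, ?_⟩
  · rw [Matrix.isUnit_iff_isUnit_det]
    have hdet : (!![z₂, z₁ - z₂, 0, 0; 0, z₂, 0, 0; 0, 0, z₄, z₃ - z₄; 0, 0, 0, z₄] :
        Matrix (Fin 4) (Fin 4) ℂ).det = (z₂ * z₄) * (z₂ * z₄) := by
      simp [Matrix.det_succ_row_zero, Fin.sum_univ_succ]; ring
    rw [hdet]
    exact (IsUnit.mul (isUnit_iff_ne_zero.2 hz) (isUnit_iff_ne_zero.2 hz))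
  · ext i j
    fin_cases i <;> fin_cases j <;>
      simp [Matrix.mul_apply, Fin.sum_univ_four, Matrix.vecHead, Matrix.vecTail] <;> ring
  · funext i
    fin_cases i <;> simp [Matrix.mulVec, dotProduct, Fin.sum_univ_four] <;> ring
end

section
/- For s ∈ ℂ define the curve γ_s : ℂ → ℂ⁴ by γ_s(t) = (e^{st}, e^{t}, e^{−t}, e^{−st}). Let r ∈ ℂ with r ≠ 0, and let P be the 4×4 permutation matrix exchanging the first and second coordinates and exchanging the third and fourth coordinates. Then P·γ_r(t) = γ_{1/r}(rt) for all t ∈ ℂ. (Hence the projective curves determined by γ_r and γ_{1/r} are projectively equivalent, i.e., the equivalence classes 𝐋_{r²} and 𝐋_{1/r²} of homogeneous nondegenerate Legendrian curves coincide.) -/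
open Matrix Complex

/-- For the curves `γ_s(t) = (e^{st}, e^t, e^{−t}, e^{−st})` and the permutation matrix `P`
exchanging the first two and last two coordinates, one has `P·γ_r(t) = γ_{1/r}(rt)`.
Hence the projective curves of `γ_r` and `γ_{1/r}` are projectively equivalent, i.e.
`𝐋_{r²} = 𝐋_{1/r²}`. -/
theorem Lr_equals_L_one_over_r
    (γ : ℂ → ℂ → (Fin 4 → ℂ))
    (hγ : ∀ s t, γ s t = ![exp (s * t), exp t, exp (-t), exp (-(s * t))])
    (r : ℂ) (hr : r ≠ 0)
    (P : Matrix (Fin 4) (Fin 4) ℂ)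
    (hP : P = !![0, 1, 0, 0; 1, 0, 0, 0; 0, 0, 0, 1; 0, 0, 1, 0]) :
    ∀ t : ℂ, P.mulVec (γ r t) = γ (1 / r) (r * t) := by
  intro t
  have h : 1 / r * (r * t) = t := by field_simp
  subst hP
  rw [hγ, hγ, h]
  funext i
  fin_cases i <;>
    simp [mulVec, dotProduct, Fin.sum_univ_four]
end

section
/- Let c ∈ ℂ and define λ(t) = −20c·tanh(ct), where tanh is the complex hyperbolic tangent. Then for every t ∈ ℂ with cosh(ct) ≠ 0, one has 10·λ'''(t)·λ'(t) − 15·(λ''(t))² + 20c²·(λ'(t))² = 0. (Equivalently, on the set where λ'(t) ≠ 0, λ satisfies 5·λ'''/λ' − (15/2)·(λ'')²/(λ')² = −10c²; taking 10c² = α² + β², this shows that λ(t) = −2√(10(α²+β²))·tanh(t·√((α²+β²)/10)) is the change of variable bringing the ODE u⁗ − (α²+β²)u'' + α²β²u = 0 to Laguerre–Forsyth canonical form.) -/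
/-!
`u(t) = tanh(ct)` solves the autonomous Riccati equation `u' = c(1 - u²)`. Along any solution of
`g' = Q(g)` the chain rule gives `(P ∘ g)' = (Q · P') ∘ g`, so every derivative of
`λ = -20c·u` is a polynomial in `u`, and the claimed identity is a polynomial identity in `u`.
-/

open Complex Polynomial

noncomputable def Polynomial.derivAlong {R : Type*} [Semiring R] (Q P : R[X]) : R[X] :=
  Q * derivative P

theorem iteratedDeriv_eval_comp_eqOn {𝕜 : Type*} [NontriviallyNormedField 𝕜] {g : 𝕜 → 𝕜}
    {Q : 𝕜[X]} {U : Set 𝕜} (hU : IsOpen U) (hg : ∀ t ∈ U, HasDerivAt g (Q.eval (g t)) t)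
    (P : 𝕜[X]) (n : ℕ) :
    Set.EqOn (iteratedDeriv n fun t => P.eval (g t))
      (fun t => (Q.derivAlong^[n] P).eval (g t)) U := by
  induction n with
  | zero => intro t _; simp
  | succ n ih =>
    intro t ht
    rw [iteratedDeriv_succ, (ih.eventuallyEq_of_mem (hU.mem_nhds ht)).deriv_eq,
      Function.iterate_succ_apply']
    refine (((Polynomial.hasDerivAt _ (g t)).comp t (hg t ht)).congr_deriv ?_).deriv
    simp only [Polynomial.derivAlong, eval_mul, mul_comm]

theorem Complex.hasDerivAt_tanh {z : ℂ} (hz : cosh z ≠ 0) :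
    HasDerivAt tanh (1 - tanh z ^ 2) z := by
  rw [show tanh = sinh / cosh from funext tanh_eq_sinh_div_cosh]
  refine ((hasDerivAt_sinh z).div (hasDerivAt_cosh z) hz).congr_deriv ?_
  simp only [Pi.div_apply]
  field_simp

theorem Complex.hasDerivAt_tanh_const_mul {c t : ℂ} (h : cosh (c * t) ≠ 0) :
    HasDerivAt (fun s => tanh (c * s)) ((C c * (1 - X ^ 2)).eval (tanh (c * t))) t := by
  refine ((hasDerivAt_tanh h).comp t ((hasDerivAt_id t).const_mul c)).congr_deriv ?_
  simp only [eval_mul, eval_C, eval_sub, eval_one, eval_pow, eval_X]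
  ring

/-- The change of variable `λ(t) = −20c·tanh(ct)` satisfies the ODE
`10·λ'''·λ' − 15·(λ'')² + 20c²·(λ')² = 0` wherever `cosh(ct) ≠ 0`; equivalently,
`5·λ'''/λ' − (15/2)·(λ'')²/(λ')² = −10c²` where `λ' ≠ 0`.  Taking `10c² = α² + β²`,
this is the change of variable bringing `u⁗ − (α²+β²)u'' + α²β²u = 0` to
Laguerre–Forsyth canonical form. -/
theorem tanh_change_of_variable_laguerre_forsyth
    (c : ℂ) (lam : ℂ → ℂ) (hlam : ∀ t, lam t = -20 * c * Complex.tanh (c * t)) :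
    ∀ t : ℂ, Complex.cosh (c * t) ≠ 0 →
      10 * iteratedDeriv 3 lam t * deriv lam t - 15 * (iteratedDeriv 2 lam t) ^ 2
        + 20 * c ^ 2 * (deriv lam t) ^ 2 = 0 := by
  intro t ht
  have hU : IsOpen {s : ℂ | cosh (c * s) ≠ 0} := isOpen_ne.preimage (by fun_prop)
  have hlam_eval : lam = fun s => (C (-20 * c) * X).eval (tanh (c * s)) := by
    funext s; simp [hlam]
  have hderivs := iteratedDeriv_eval_comp_eqOn hU (fun s hs => hasDerivAt_tanh_const_mul hs)
    (C (-20 * c) * X)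
  rw [← iteratedDeriv_one, hlam_eval, hderivs 3 ht, hderivs 2 ht, hderivs 1 ht]
  simp only [Function.iterate_succ_apply', Function.iterate_zero_apply, Polynomial.derivAlong,
    derivative_mul, derivative_sub, derivative_neg, derivative_C, derivative_X, derivative_one,
    derivative_X_pow_succ, eval_mul, eval_add, eval_sub, eval_neg, eval_C, eval_one, eval_pow,
    zero_mul, mul_zero, zero_add, add_zero, zero_sub]
  ring
end

section
/- Let c, a, λ ∈ ℂ with c ≠ 0, a² = −6c², and λ² = 2a/c. Let A_{N7}(c) be the 4×4 matrix with rows (0, −3c, 0, −1), (−1, 0, −2c, 0), (0, −2, 0, c), (0, 0, 3, 0), and let A_{D6}(a) be the 4×4 matrix with rows (0, −3a, 0, −12), (−2, 0, 4a, 0), (0, 2, 0, 2a), (0, 0, 3, 0). Then the characteristic polynomial of λ·A_{N7}(c) equals the characteristic polynomial of A_{D6}(a), namely X⁴ − 20a·X² + 36a² − 144. (This is the matrix-level form of the unexpected relation: when a² = −6c², the homogeneous Legendrian curves in ℙ³ associated to the multiply-transitive (2,3,5)-distributions N7_c and D6_a are projectively equivalent.) -/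
/-!
Both matrices have nonzero entries only at positions `(i, j)` with `i + j` odd, and every such
4×4 matrix has an even characteristic polynomial `X⁴ - e X² + d` with `e`, `d` read off from
the entries. For `λ • A_{N7}(c)` one gets `e = 10cλ²` and `d = λ⁴(9c² + 6)`; the hypotheses give
`λ²c = 2a` and `λ⁴ = -24`, which turn these into the coefficients `20a` and `36a² - 144` of
`A_{D6}(a)`.
-/

open Matrix Polynomial

theorem Matrix.smul_fin_four_checkerboard {R : Type*} [MulZeroClass R] (l p q r s t u v : R) :
    l • (!![0, p, 0, q; r, 0, s, 0; 0, t, 0, u; 0, 0, v, 0] : Matrix (Fin 4) (Fin 4) R) =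
      !![0, l * p, 0, l * q; l * r, 0, l * s, 0; 0, l * t, 0, l * u; 0, 0, l * v, 0] := by
  simp only [smul_of, smul_cons, smul_empty, smul_eq_mul, mul_zero]

theorem Matrix.charpoly_fin_four_checkerboard {R : Type*} [CommRing R] (p q r s t u v : R) :
    (!![0, p, 0, q; r, 0, s, 0; 0, t, 0, u; 0, 0, v, 0] : Matrix (Fin 4) (Fin 4) R).charpoly =
      X ^ 4 - C (p * r + s * t + u * v) * X ^ 2 + C (r * v * (p * u - q * t)) := by
  rw [charpoly, det_succ_row_zero]
  simp [Fin.sum_univ_succ, det_fin_three, charmatrix_apply, Fin.succAbove]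
  ring

/-- When `a² = −6c²` (and `λ² = 2a/c`), the rescaled symmetry generator `λ·A_{N7}(c)` has
the same characteristic polynomial as `A_{D6}(a)`, namely `X⁴ − 20a·X² + 36a² − 144`.
This is the matrix-level form of the unexpected relation: the homogeneous Legendrian
curves in `ℙ³` associated to `N7_c` and `D6_a` are projectively equivalent. -/
theorem N7_D6_charpoly_relation
    (c a l : ℂ) (hc : c ≠ 0) (ha : a ^ 2 = -6 * c ^ 2) (hl : l ^ 2 = 2 * a / c)
    (AN7 AD6 : Matrix (Fin 4) (Fin 4) ℂ)
    (hAN7 : AN7 = !![0, -3 * c, 0, -1; -1, 0, -2 * c, 0; 0, -2, 0, c; 0, 0, 3, 0])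
    (hAD6 : AD6 = !![0, -3 * a, 0, -12; -2, 0, 4 * a, 0; 0, 2, 0, 2 * a; 0, 0, 3, 0]) :
    (l • AN7).charpoly = AD6.charpoly ∧
      AD6.charpoly = X ^ 4 - C (20 * a) * X ^ 2 + C (36 * a ^ 2 - 144) := by
  have hl2 : l ^ 2 * c = 2 * a := by rw [hl, div_mul_cancel₀ _ hc]
  have hl4 : l ^ 4 = -24 := mul_right_cancel₀ (pow_ne_zero 2 hc) <| by
    linear_combination (l ^ 2 * c + 2 * a) * hl2 + 4 * ha
  subst hAN7 hAD6
  rw [smul_fin_four_checkerboard, charpoly_fin_four_checkerboard, charpoly_fin_four_checkerboard]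
  constructor <;> congrm X ^ 4 - C ?_ * X ^ 2 + C ?_
  · linear_combination 10 * hl2
  · linear_combination (9 * c ^ 2 + 6) * hl4 - 36 * ha
  · ring
  · ring
end

section
/- Let A_{N6} be the 4×4 complex matrix with rows (0, −18, 0, −42), (−1, 0, −12, 0), (0, −2, 0, 6), (0, 0, 3, 0), and for a ∈ ℂ let A_{D6}(a) be the 4×4 matrix with rows (0, −3a, 0, −12), (−2, 0, 4a, 0), (0, 2, 0, 2a), (0, 0, 3, 0). Then: (i) the characteristic polynomial of A_{N6} is X⁴ − 60X² + 576; and (ii) if a, μ ∈ ℂ satisfy a² = −36/7 and μ² = 3/a, then the characteristic polynomial of μ·A_{D6}(a) also equals X⁴ − 60X² + 576, hence equals that of A_{N6}. (This is the matrix-level form of the relation that when a² = −36/7, the homogeneous Legendrian curve in ℙ³ associated to the multiply-transitive (2,3,5)-distribution N6 is projectively equivalent to the one associated to D6_a.) -/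
/-!
Both matrices are odd for the grading of `Fin 4` by parity, so their characteristic polynomials
are even: `X⁴ − e₂ X² + det`, where `e₂` is the sum of the products of the symmetric off-diagonal
pairs and the determinant factors through the two off-diagonal blocks. Scaling by `μ` multiplies
these coefficients by `μ²` and `μ⁴`; for `A_{D6}(a)` they are `20a` and `36a² − 144`, which
`μ²a = 3` and `μ⁴ = 9/a² = −7/4` turn into `60` and `576`.
-/

open Matrix Polynomial

namespace Matrix

variable {R : Type*} [CommRing R]

def oddFin4 (p q r s t u v : R) : Matrix (Fin 4) (Fin 4) R :=
  !![0, p, 0, q; r, 0, s, 0; 0, t, 0, u; 0, 0, v, 0]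

theorem smul_oddFin4 (μ p q r s t u v : R) :
    μ • oddFin4 p q r s t u v = oddFin4 (μ * p) (μ * q) (μ * r) (μ * s) (μ * t) (μ * u) (μ * v) := by
  ext i j
  fin_cases i <;> fin_cases j <;> simp [oddFin4]

theorem charpoly_oddFin4 (p q r s t u v : R) :
    (oddFin4 p q r s t u v).charpoly =
      X ^ 4 - C (p * r + s * t + u * v) * X ^ 2 + C ((p * u - q * t) * r * v) := by
  rw [charpoly, charmatrix, oddFin4, det_succ_row_zero]
  simp only [scalar_apply, RingHom.mapMatrix_apply, sub_apply, map_apply, of_apply, det_fin_three,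
    submatrix_apply, Fin.succAbove, cons_val, Fin.reduceSucc, Fin.reduceCastSucc, Fin.sum_univ_succ,
    Fin.coe_ofNat_eq_mod, diagonal_apply_eq, map_zero, ↓reduceIte, ne_eq, Fin.reduceEq,
    not_false_eq_true, diagonal_apply_ne, Fin.reduceLT, map_add, map_mul,
    map_sub]
  ring

end Matrix

/-- (i) The symmetry generator `A_{N6}` has characteristic polynomial `X⁴ − 60X² + 576`;
(ii) if `a² = −36/7` and `μ² = 3/a`, then `μ·A_{D6}(a)` has the same characteristic
polynomial `X⁴ − 60X² + 576`.  This is the matrix-level form of the relation that for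
`a² = −36/7` the homogeneous Legendrian curve in `ℙ³` associated to `N6` is projectively
equivalent to the one associated to `D6_a`. -/
theorem N6_D6_charpoly_relation
    (AN6 : Matrix (Fin 4) (Fin 4) ℂ)
    (hAN6 : AN6 = !![0, -18, 0, -42; -1, 0, -12, 0; 0, -2, 0, 6; 0, 0, 3, 0])
    (AD6 : ℂ → Matrix (Fin 4) (Fin 4) ℂ)
    (hAD6 : ∀ a : ℂ,
      AD6 a = !![0, -3 * a, 0, -12; -2, 0, 4 * a, 0; 0, 2, 0, 2 * a; 0, 0, 3, 0]) :
    AN6.charpoly = X ^ 4 - C 60 * X ^ 2 + C 576 ∧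
      ∀ a μ : ℂ, a ^ 2 = -36 / 7 → μ ^ 2 = 3 / a →
        (μ • AD6 a).charpoly = X ^ 4 - C 60 * X ^ 2 + C 576 := by
  constructor
  · have hN6 : AN6 = oddFin4 (-18) (-42) (-1) (-12) (-2) 6 3 := hAN6
    rw [hN6, charpoly_oddFin4]
    norm_num
  · intro a μ ha hμ
    have ha0 : a ≠ 0 := by rintro rfl; norm_num at ha
    have hμa : μ ^ 2 * a = 3 := by rw [hμ, div_mul_cancel₀ _ ha0]
    have hμ4 : μ ^ 4 = -7 / 4 := by
      have h9 : μ ^ 4 * a ^ 2 = 9 := by linear_combination (μ ^ 2 * a + 3) * hμa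
      rw [ha] at h9
      linear_combination (-7 / 36 : ℂ) * h9
    have hD6 : AD6 a = oddFin4 (-3 * a) (-12) (-2) (4 * a) 2 (2 * a) 3 := hAD6 a
    rw [hD6, smul_oddFin4, charpoly_oddFin4]
    congr 3
    · exact congrArg C (by linear_combination 20 * hμa)
    · linear_combination 36 * μ ^ 4 * ha - 2304 / 7 * hμ4
end
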